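/- There exists C > 0 such that for all |ε|_∞ ≤ 1/2, all i ≥ 0 and all h of the form h(r)=f(r)+r g(r) with f Lipschitz and g bounded, |Q_ε^i h(r)| ≤ |f|_∞ + (r + C i)|g|_∞ for every r. -/

import Mathlib

/-!
`Q_ε` moves a walker from `r` to `r + ℓ + 1` with weight `w ℓ`. These weights telescope
(`w ℓ = P ℓ - P (ℓ + 1)` for the survival products `P`), so they have total mass `1`, and for
`|ε| ≤ 1/2` they are dominated by `(3/4)^(ℓ+1)`, so the mean jump is at most `12`. Hence one step
of `Q_ε` turns a bound `A + s B` into `A + (r + 12) B`, and iterating from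
`|f s + s g s| ≤ |f|_∞ + s |g|_∞` gives the claim with `C = 12`.
-/

/-- The cookie transition operator `Q_ε`. -/
noncomputable def Qeps (ε : ℕ → ℝ) (f : ℕ → ℝ) (r : ℕ) : ℝ :=
  ∑' ℓ : ℕ, f (r + ℓ + 1) *
    ((2 : ℝ) ^ (-(ℓ + 1 : ℤ)) * (∏ i ∈ Finset.range ℓ, (1 + ε (r + i + 1)))
      * (1 - ε (r + ℓ + 1)))

open Filter Finset Topology

theorem hasSum_succ_mul_geometric_succ {q : ℝ} (hq : |q| < 1) :
    HasSum (fun n : ℕ => ((n : ℝ) + 1) * q ^ (n + 1)) (q / (1 - q) ^ 2) := by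
  have h := hasSum_coe_mul_geometric_of_norm_lt_one (Real.norm_eq_abs q ▸ hq)
  rw [← hasSum_nat_add_iff' 1] at h
  simpa using h

theorem abs_tsum_mul_le_of_abs_le_affine {H w v : ℕ → ℝ} {A B c : ℝ} (r : ℕ) (hB : 0 ≤ B)
    (hH : ∀ s : ℕ, |H s| ≤ A + s * B) (hw0 : ∀ ℓ, 0 ≤ w ℓ) (hw : HasSum w 1)
    (hv : ∀ ℓ : ℕ, ((ℓ : ℝ) + 1) * w ℓ ≤ v ℓ) (hvc : HasSum v c) :
    |∑' ℓ, H (r + ℓ + 1) * w ℓ| ≤ A + (r + c) * B := by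
  have hbound : ∀ ℓ, ‖H (r + ℓ + 1) * w ℓ‖ ≤ (A + r * B) * w ℓ + B * v ℓ := by
    intro ℓ
    have hHℓ : |H (r + ℓ + 1)| ≤ A + r * B + B * ((ℓ : ℝ) + 1) := by
      have := hH (r + ℓ + 1); push_cast at this; linarith
    calc ‖H (r + ℓ + 1) * w ℓ‖ = |H (r + ℓ + 1)| * w ℓ := by
          rw [Real.norm_eq_abs, abs_mul, abs_of_nonneg (hw0 ℓ)]
      _ ≤ (A + r * B + B * ((ℓ : ℝ) + 1)) * w ℓ := by gcongr; exact hw0 ℓ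
      _ = (A + r * B) * w ℓ + B * (((ℓ : ℝ) + 1) * w ℓ) := by ring
      _ ≤ (A + r * B) * w ℓ + B * v ℓ := by gcongr; exact hv ℓ
  have hsum := (hw.mul_left (A + r * B)).add (hvc.mul_left B)
  calc |∑' ℓ, H (r + ℓ + 1) * w ℓ| ≤ (A + r * B) * 1 + B * c := tsum_of_norm_bounded hsum hbound
    _ = A + (r + c) * B := by ring

namespace Qeps

variable (ε : ℕ → ℝ) (r : ℕ)

/-- The probability of jumping from `r` to `r + ℓ + 1`. -/
noncomputable def weight (ℓ : ℕ) : ℝ :=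
  (2 : ℝ) ^ (-(ℓ + 1 : ℤ)) * (∏ i ∈ range ℓ, (1 + ε (r + i + 1))) * (1 - ε (r + ℓ + 1))

/-- The probability of jumping beyond `r + n`. -/
noncomputable def survival (n : ℕ) : ℝ :=
  ∏ i ∈ range n, (1 + ε (r + i + 1)) / 2

theorem apply_eq_tsum (f : ℕ → ℝ) : Qeps ε f r = ∑' ℓ, f (r + ℓ + 1) * weight ε r ℓ := rfl

theorem weight_eq_survival_mul (ℓ : ℕ) :
    weight ε r ℓ = survival ε r ℓ * ((1 - ε (r + ℓ + 1)) / 2) := by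
  have h2 : (2 : ℝ) ^ (-(ℓ + 1 : ℤ)) = (1 / 2) ^ ℓ * (1 / 2) := by
    rw [show (-(ℓ + 1 : ℤ)) = -((ℓ + 1 : ℕ) : ℤ) by push_cast; ring,
      zpow_neg, zpow_natCast, pow_succ, mul_inv, ← inv_pow]
    norm_num
  simp only [weight, survival, h2, prod_div_distrib, prod_const, card_range, div_pow, one_pow]
  field_simp

theorem weight_eq_survival_sub (ℓ : ℕ) :
    weight ε r ℓ = survival ε r ℓ - survival ε r (ℓ + 1) := by
  rw [weight_eq_survival_mul, survival, survival, prod_range_succ]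
  ring

variable {ε}

section HalfBounded

variable (hε : ∀ i, |ε i| ≤ 1 / 2)
include hε

theorem survival_nonneg (n : ℕ) : 0 ≤ survival ε r n :=
  prod_nonneg fun i _ => by linarith [(abs_le.mp (hε (r + i + 1))).1]

theorem survival_le_pow (n : ℕ) : survival ε r n ≤ (3 / 4) ^ n := by
  calc survival ε r n ≤ ∏ _i ∈ range n, (3 / 4 : ℝ) :=
        prod_le_prod (fun i _ => by linarith [(abs_le.mp (hε (r + i + 1))).1])
          (fun i _ => by linarith [(abs_le.mp (hε (r + i + 1))).2])
    _ = (3 / 4) ^ n := by rw [prod_const, card_range]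

theorem weight_nonneg (ℓ : ℕ) : 0 ≤ weight ε r ℓ := by
  rw [weight_eq_survival_mul]
  have := (abs_le.mp (hε (r + ℓ + 1))).2
  exact mul_nonneg (survival_nonneg r hε ℓ) (by linarith)

theorem weight_le_pow (ℓ : ℕ) : weight ε r ℓ ≤ (3 / 4) ^ (ℓ + 1) := by
  rw [weight_eq_survival_mul, pow_succ]
  obtain ⟨hlo, hhi⟩ := abs_le.mp (hε (r + ℓ + 1))
  exact mul_le_mul (survival_le_pow r hε ℓ) (by linarith) (by linarith) (by positivity)

theorem hasSum_weight : HasSum (weight ε r) 1 := by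
  rw [hasSum_iff_tendsto_nat_of_nonneg (weight_nonneg r hε)]
  have hpartial : ∀ n, ∑ ℓ ∈ range n, weight ε r ℓ = 1 - survival ε r n := by
    intro n
    simp only [weight_eq_survival_sub, sum_range_sub', survival, range_zero, prod_empty]
  have hsurvival : Tendsto (survival ε r) atTop (𝓝 0) :=
    squeeze_zero (survival_nonneg r hε) (survival_le_pow r hε)
      (tendsto_pow_atTop_nhds_zero_of_lt_one (by norm_num) (by norm_num))
  simpa [hpartial] using hsurvival.const_sub 1

theorem abs_le_of_abs_le_affine {H : ℕ → ℝ} {A B : ℝ} (hB : 0 ≤ B)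
    (hH : ∀ s : ℕ, |H s| ≤ A + s * B) : |Qeps ε H r| ≤ A + (r + 12) * B := by
  have hgeom : HasSum (fun n : ℕ => ((n : ℝ) + 1) * (3 / 4) ^ (n + 1)) 12 := by
    convert hasSum_succ_mul_geometric_succ (q := 3 / 4) (by norm_num [abs_of_pos]) using 1
    norm_num
  rw [apply_eq_tsum]
  exact abs_tsum_mul_le_of_abs_le_affine r hB hH (weight_nonneg r hε) (hasSum_weight r hε)
    (fun ℓ => by gcongr; exact weight_le_pow r hε ℓ) hgeom

end HalfBounded

theorem abs_iterate_le_of_abs_le_affine (hε : ∀ i, |ε i| ≤ 1 / 2) {H : ℕ → ℝ} {A B : ℝ}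
    (hB : 0 ≤ B) (hH : ∀ s : ℕ, |H s| ≤ A + s * B) (i : ℕ) :
    |(Qeps ε)^[i] H r| ≤ A + (r + 12 * i) * B := by
  induction i generalizing r with
  | zero => simpa using hH r
  | succ i ih =>
    rw [Function.iterate_succ_apply']
    have hstep := abs_le_of_abs_le_affine r hε (A := A + 12 * i * B) hB
      (fun s => by linarith [ih s])
    push_cast
    linarith

end Qeps

theorem stmt_16 :
    ∃ C : ℝ, 0 < C ∧
      ∀ ε : ℕ → ℝ, (∀ i, |ε i| ≤ 1 / 2) →
        ∀ f g : ℕ → ℝ, ∀ Kf F M : ℝ, 0 ≤ Kf →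
          (∀ r r' : ℕ, |f r - f r'| ≤ Kf * |(r : ℝ) - r'|) →
          (∀ r : ℕ, |f r| ≤ F) →
          (∀ r : ℕ, |g r| ≤ M) →
          ∀ i : ℕ, ∀ r : ℕ,
            |(Qeps ε)^[i] (fun r => f r + r * g r) r| ≤ F + ((r : ℝ) + C * i) * M := by
  refine ⟨12, by norm_num, fun ε hε f g _ F M _ _ hF hM i r => ?_⟩
  have hM0 : 0 ≤ M := (abs_nonneg _).trans (hM 0)
  have hinit : ∀ s : ℕ, |f s + s * g s| ≤ F + s * M := fun s =>
    calc |f s + s * g s| ≤ |f s| + s * |g s| := by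
          simpa [abs_mul] using abs_add_le (f s) (s * g s)
      _ ≤ F + s * M := by gcongr; exacts [hF s, hM s]
  exact Qeps.abs_iterate_le_of_abs_le_affine r hε hM0 hinit i
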